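/- arXiv:2001.02608 — 6 statements merged into one kernel-verified Lean document; each statement's English description precedes it below -/
import Mathlib

section
/- Let R, S, T be groups, let U be a subgroup of R × S and V a subgroup of S × T, and let W = U * V. Set M = p₂(U) ∩ p₁(V) and let N be the subgroup of S generated by p₂(U) ∩ k₁(V) and k₂(U) ∩ p₁(V). Then N is a normal subgroup of M, and there are group isomorphisms p₁(W)/k₁(W) ≅ M/N and M/N ≅ p₂(W)/k₂(W). -/
/-!
Both sides are computed through Goursat's correspondence: a subgroup `X ≤ A × B` induces
`p₁(X)/K ≅ p₂(X)/L` as soon as `x.1 ∈ K ↔ x.2 ∈ L` on `X`. For the first isomorphism take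
`X = {(r, s) ∈ U | s ∈ p₁(V)}`, which projects onto `p₁(W)` and `M`; for `(r, s) ∈ X` one has
`r ∈ k₁(W)` iff `s ∈ N`, because `M` normalizes both generators of `N`, so that
`N = (p₂(U) ∩ k₁(V)) · (k₂(U) ∩ p₁(V))`. The second isomorphism is the mirror image, with
`X = {(s, t) ∈ V | s ∈ p₂(U)}`.
-/

open scoped Classical

namespace SubgroupCat

variable {R S T : Type*}

/-- The star product of subgroups `U ≤ R × S` and `V ≤ S × T`:
`U * V = {(r, t) | ∃ s, (r, s) ∈ U ∧ (s, t) ∈ V}`. -/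
def starProd [Group R] [Group S] [Group T] (U : Subgroup (R × S)) (V : Subgroup (S × T)) :
    Subgroup (R × T) where
  carrier := {rt | ∃ s : S, (rt.1, s) ∈ U ∧ (s, rt.2) ∈ V}
  one_mem' := ⟨1, one_mem U, one_mem V⟩
  mul_mem' := by
    rintro a b ⟨s, hU, hV⟩ ⟨s', hU', hV'⟩
    exact ⟨s * s', mul_mem hU hU', mul_mem hV hV'⟩
  inv_mem' := by
    rintro a ⟨s, hU, hV⟩
    exact ⟨s⁻¹, inv_mem hU, inv_mem hV⟩

@[simp] lemma mem_starProd [Group R] [Group S] [Group T] {U : Subgroup (R × S)}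
    {V : Subgroup (S × T)} {p : R × T} :
    p ∈ starProd U V ↔ ∃ s : S, (p.1, s) ∈ U ∧ (s, p.2) ∈ V := Iff.rfl

/-- First projection `p₁(U) = {r | ∃ s, (r, s) ∈ U}`. -/
def p1 [Group R] [Group S] (U : Subgroup (R × S)) : Subgroup R :=
  U.map (MonoidHom.fst R S)

/-- Second projection `p₂(U) = {s | ∃ r, (r, s) ∈ U}`. -/
def p2 [Group R] [Group S] (U : Subgroup (R × S)) : Subgroup S :=
  U.map (MonoidHom.snd R S)

/-- First kernel `k₁(U) = {r | (r, 1) ∈ U}`. -/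
def k1 [Group R] [Group S] (U : Subgroup (R × S)) : Subgroup R :=
  U.comap (MonoidHom.inl R S)

/-- Second kernel `k₂(U) = {s | (1, s) ∈ U}`. -/
def k2 [Group R] [Group S] (U : Subgroup (R × S)) : Subgroup S :=
  U.comap (MonoidHom.inr R S)

/-- `k₁(U)` is a normal subgroup of `p₁(U)`. -/
instance k1_normal [Group R] [Group S] (U : Subgroup (R × S)) :
    ((k1 U).subgroupOf (p1 U)).Normal := by
  constructor
  intro n hn g
  rw [Subgroup.mem_subgroupOf] at hn ⊢
  obtain ⟨x, hx, h1⟩ := g.2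
  have hn1 : ((n : R), (1 : S)) ∈ U := hn
  have key : (x * ((n : R), (1 : S)) * x⁻¹) ∈ U := mul_mem (mul_mem hx hn1) (inv_mem hx)
  have key' : ((x.1 * (n : R) * x.1⁻¹ : R), (1 : S)) ∈ U := by
    simpa [Prod.mul_def, Prod.inv_mk, Prod.ext_iff] using key
  have h1' : x.1 = (g : R) := h1
  show ((↑(g * n * g⁻¹) : R), (1 : S)) ∈ U
  push_cast
  rw [← h1']
  exact key'

/-- `k₂(U)` is a normal subgroup of `p₂(U)`. -/
instance k2_normal [Group R] [Group S] (U : Subgroup (R × S)) :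
    ((k2 U).subgroupOf (p2 U)).Normal := by
  constructor
  intro n hn g
  rw [Subgroup.mem_subgroupOf] at hn ⊢
  obtain ⟨x, hx, h1⟩ := g.2
  have hn1 : ((1 : R), (n : S)) ∈ U := hn
  have key : (x * ((1 : R), (n : S)) * x⁻¹) ∈ U := mul_mem (mul_mem hx hn1) (inv_mem hx)
  have key' : ((1 : R), (x.2 * (n : S) * x.2⁻¹ : S)) ∈ U := by
    simpa [Prod.mul_def, Prod.inv_mk, Prod.ext_iff] using key
  have h1' : x.2 = (g : S) := h1
  show ((1 : R), (↑(g * n * g⁻¹) : S)) ∈ U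
  push_cast
  rw [← h1']
  exact key'

section Projections

variable [Group R] [Group S] {U : Subgroup (R × S)}

lemma mem_p1 {r : R} : r ∈ p1 U ↔ ∃ s, (r, s) ∈ U :=
  ⟨fun ⟨x, hx, hr⟩ => ⟨x.2, hr ▸ hx⟩, fun ⟨s, h⟩ => ⟨(r, s), h, rfl⟩⟩

lemma mem_p2 {s : S} : s ∈ p2 U ↔ ∃ r, (r, s) ∈ U :=
  ⟨fun ⟨x, hx, hs⟩ => ⟨x.1, hs ▸ hx⟩, fun ⟨r, h⟩ => ⟨(r, s), h, rfl⟩⟩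

lemma mem_k1 {r : R} : r ∈ k1 U ↔ (r, (1 : S)) ∈ U := Iff.rfl

lemma mem_k2 {s : S} : s ∈ k2 U ↔ ((1 : R), s) ∈ U := Iff.rfl

lemma k1_le_p1 : k1 U ≤ p1 U := fun _ h => mem_p1.2 ⟨1, h⟩

lemma k2_le_p2 : k2 U ≤ p2 U := fun _ h => mem_p2.2 ⟨1, h⟩

lemma p1_le_normalizer_k1 : p1 U ≤ Subgroup.normalizer (k1 U : Set R) :=
  Subgroup.le_normalizer_of_normal_subgroupOf k1_le_p1

lemma p2_le_normalizer_k2 : p2 U ≤ Subgroup.normalizer (k2 U : Set S) :=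
  Subgroup.le_normalizer_of_normal_subgroupOf k2_le_p2

end Projections

theorem nonempty_quotient_mulEquiv_of_graph {A B : Type*} [Group A] [Group B]
    (X : Subgroup (A × B)) {A' KA : Subgroup A} {B' KB : Subgroup B}
    [(KA.subgroupOf A').Normal] [(KB.subgroupOf B').Normal]
    (hA : p1 X = A') (hB : p2 X = B') (hK : ∀ x ∈ X, x.1 ∈ KA ↔ x.2 ∈ KB) :
    Nonempty (A' ⧸ KA.subgroupOf A' ≃* B' ⧸ KB.subgroupOf B') := by
  subst hA hB
  let φ : X →* p1 X ⧸ KA.subgroupOf (p1 X) :=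
    (QuotientGroup.mk' _).comp ((MonoidHom.fst A B).subgroupMap X)
  let ψ : X →* p2 X ⧸ KB.subgroupOf (p2 X) :=
    (QuotientGroup.mk' _).comp ((MonoidHom.snd A B).subgroupMap X)
  have hφ : Function.Surjective φ :=
    (QuotientGroup.mk'_surjective _).comp (MonoidHom.subgroupMap_surjective _ X)
  have hψ : Function.Surjective ψ :=
    (QuotientGroup.mk'_surjective _).comp (MonoidHom.subgroupMap_surjective _ X)
  have hker : φ.ker = ψ.ker := by
    ext x
    change (QuotientGroup.mk _ : p1 X ⧸ KA.subgroupOf (p1 X)) = 1 ↔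
      (QuotientGroup.mk _ : p2 X ⧸ KB.subgroupOf (p2 X)) = 1
    rw [QuotientGroup.eq_one_iff, QuotientGroup.eq_one_iff]
    exact hK x x.2
  exact ⟨(QuotientGroup.quotientKerEquivOfSurjective φ hφ).symm.trans
    ((QuotientGroup.quotientMulEquivOfEq hker).trans
      (QuotientGroup.quotientKerEquivOfSurjective ψ hψ))⟩

section Butterfly

variable [Group R] [Group S] [Group T] {U : Subgroup (R × S)} {V : Subgroup (S × T)}

lemma sup_le_p2_inf_p1 : (p2 U ⊓ k1 V) ⊔ (k2 U ⊓ p1 V) ≤ p2 U ⊓ p1 V :=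
  sup_le (inf_le_inf_left _ k1_le_p1) (inf_le_inf_right _ k2_le_p2)

lemma p2_inf_p1_le_normalizer_p2_inf_k1 :
    p2 U ⊓ p1 V ≤ Subgroup.normalizer ((p2 U ⊓ k1 V : Subgroup S) : Set S) :=
  (inf_le_inf Subgroup.le_normalizer p1_le_normalizer_k1).trans
    Subgroup.inf_normalizer_le_normalizer_inf

lemma p2_inf_p1_le_normalizer_k2_inf_p1 :
    p2 U ⊓ p1 V ≤ Subgroup.normalizer ((k2 U ⊓ p1 V : Subgroup S) : Set S) :=
  (inf_le_inf p2_le_normalizer_k2 Subgroup.le_normalizer).trans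
    Subgroup.inf_normalizer_le_normalizer_inf

instance normal_sup_subgroupOf_p2_inf_p1 :
    (((p2 U ⊓ k1 V) ⊔ (k2 U ⊓ p1 V)).subgroupOf (p2 U ⊓ p1 V)).Normal :=
  (Subgroup.normal_subgroupOf_iff_le_normalizer sup_le_p2_inf_p1).2 <|
    (le_inf p2_inf_p1_le_normalizer_p2_inf_k1 p2_inf_p1_le_normalizer_k2_inf_p1).trans
      (Subgroup.normalizer_inf_normalizer_le_normalizer_sup _ _)

lemma mem_sup_iff_exists_mul {s : S} :
    s ∈ (p2 U ⊓ k1 V) ⊔ (k2 U ⊓ p1 V) ↔ ∃ a ∈ p2 U ⊓ k1 V, ∃ b ∈ k2 U ⊓ p1 V, a * b = s := by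
  rw [← SetLike.mem_coe, Subgroup.coe_mul_of_left_le_normalizer_right _ _
    ((le_sup_left.trans sup_le_p2_inf_p1).trans p2_inf_p1_le_normalizer_k2_inf_p1)]
  rfl

lemma p1_inf_comap_snd : p1 (U ⊓ (p1 V).comap (MonoidHom.snd R S)) = p1 (starProd U V) := by
  ext r
  simp only [mem_p1, Subgroup.mem_inf, Subgroup.mem_comap, MonoidHom.coe_snd, mem_starProd]
  constructor
  · rintro ⟨s, hU, t, hV⟩
    exact ⟨t, s, hU, hV⟩
  · rintro ⟨t, s, hU, hV⟩
    exact ⟨s, hU, t, hV⟩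

lemma p2_inf_comap_snd : p2 (U ⊓ (p1 V).comap (MonoidHom.snd R S)) = p2 U ⊓ p1 V := by
  ext s
  simp only [mem_p2, Subgroup.mem_inf, Subgroup.mem_comap, MonoidHom.coe_snd, exists_and_right]

lemma p1_inf_comap_fst : p1 (V ⊓ (p2 U).comap (MonoidHom.fst S T)) = p2 U ⊓ p1 V := by
  ext s
  simp only [mem_p1, Subgroup.mem_inf, Subgroup.mem_comap, MonoidHom.coe_fst, exists_and_right]
  exact and_comm

lemma p2_inf_comap_fst : p2 (V ⊓ (p2 U).comap (MonoidHom.fst S T)) = p2 (starProd U V) := by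
  ext t
  simp only [mem_p2, Subgroup.mem_inf, Subgroup.mem_comap, MonoidHom.coe_fst, mem_starProd]
  constructor
  · rintro ⟨s, hV, r, hU⟩
    exact ⟨r, s, hU, hV⟩
  · rintro ⟨r, s, hU, hV⟩
    exact ⟨s, hV, r, hU⟩

lemma mem_k1_starProd_iff {r : R} {s : S} (hU : (r, s) ∈ U) (hV : s ∈ p1 V) :
    r ∈ k1 (starProd U V) ↔ s ∈ (p2 U ⊓ k1 V) ⊔ (k2 U ⊓ p1 V) := by
  rw [mem_sup_iff_exists_mul]
  constructor
  · rintro ⟨s', hU', hV'⟩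
    have hk2 : ((1 : R), s'⁻¹ * s) ∈ U := by simpa using mul_mem (inv_mem hU') hU
    exact ⟨s', Subgroup.mem_inf.2 ⟨mem_p2.2 ⟨r, hU'⟩, hV'⟩, s'⁻¹ * s,
      Subgroup.mem_inf.2 ⟨hk2, mul_mem (inv_mem (k1_le_p1 (mem_k1.2 hV'))) hV⟩,
      mul_inv_cancel_left s' s⟩
  · rintro ⟨a, ⟨-, ha⟩, b, ⟨hb, -⟩, rfl⟩
    have hU' : (r, a) ∈ U := by simpa using mul_mem hU (inv_mem (mem_k2.1 hb))
    exact ⟨a, hU', ha⟩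

lemma mem_k2_starProd_iff {s : S} {t : T} (hV : (s, t) ∈ V) (hU : s ∈ p2 U) :
    t ∈ k2 (starProd U V) ↔ s ∈ (p2 U ⊓ k1 V) ⊔ (k2 U ⊓ p1 V) := by
  rw [mem_sup_iff_exists_mul]
  constructor
  · rintro ⟨s', hU', hV'⟩
    have hk1 : (s * s'⁻¹, (1 : T)) ∈ V := by simpa using mul_mem hV (inv_mem hV')
    exact ⟨s * s'⁻¹, Subgroup.mem_inf.2 ⟨mul_mem hU (inv_mem (k2_le_p2 (mem_k2.2 hU'))), hk1⟩,
      s', Subgroup.mem_inf.2 ⟨hU', mem_p1.2 ⟨t, hV'⟩⟩, inv_mul_cancel_right s s'⟩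
  · rintro ⟨a, ⟨-, ha⟩, b, ⟨hb, -⟩, rfl⟩
    have hV' : (b, t) ∈ V := by simpa using mul_mem (inv_mem (mem_k1.1 ha)) hV
    exact ⟨b, hb, hV'⟩

end Butterfly

/-- Let `W = U * V`, `M = p₂(U) ∩ p₁(V)` and let `N` be the subgroup generated by
`p₂(U) ∩ k₁(V)` and `k₂(U) ∩ p₁(V)`.  Then `N ⊴ M` and
`p₁(W)/k₁(W) ≅ M/N ≅ p₂(W)/k₂(W)`. -/
theorem butterfly_star (R S T : Type*) [Group R] [Group S] [Group T]
    (U : Subgroup (R × S)) (V : Subgroup (S × T)) :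
    (p2 U ⊓ k1 V) ⊔ (k2 U ⊓ p1 V) ≤ p2 U ⊓ p1 V ∧
    ∃ _ : (((p2 U ⊓ k1 V) ⊔ (k2 U ⊓ p1 V)).subgroupOf (p2 U ⊓ p1 V)).Normal,
      Nonempty
        ((p1 (starProd U V) ⧸ (k1 (starProd U V)).subgroupOf (p1 (starProd U V))) ≃*
          (↥(p2 U ⊓ p1 V) ⧸ ((p2 U ⊓ k1 V) ⊔ (k2 U ⊓ p1 V)).subgroupOf (p2 U ⊓ p1 V))) ∧
      Nonempty
        ((↥(p2 U ⊓ p1 V) ⧸ ((p2 U ⊓ k1 V) ⊔ (k2 U ⊓ p1 V)).subgroupOf (p2 U ⊓ p1 V)) ≃*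
          (p2 (starProd U V) ⧸ (k2 (starProd U V)).subgroupOf (p2 (starProd U V)))) :=
  ⟨sup_le_p2_inf_p1, inferInstance,
    nonempty_quotient_mulEquiv_of_graph _ p1_inf_comap_snd p2_inf_comap_snd
      fun _ hx => mem_k1_starProd_iff hx.1 hx.2,
    nonempty_quotient_mulEquiv_of_graph _ p1_inf_comap_fst p2_inf_comap_fst
      fun _ hx => (mem_k2_starProd_iff hx.1 hx.2).symm⟩

end SubgroupCat
end

section
/- Let R and S be groups, let U be a subgroup of R × S, and let E = p₁(U)/k₁(U) be the thorax of U. Then U factorizes through E: there exist a subgroup X of R × E and a subgroup Y of E × S such that U = X * Y. -/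
open scoped Classical

namespace SubgroupCat

variable {R S T : Type*}

/-!
Take `X = {(r, [r]) | r ∈ p₁(U)}` and `Y = {([r], s) | (r, s) ∈ U}`; clearly `U ⊆ X * Y`.
Conversely, if `[r] = [r']` with `(r', s) ∈ U`, then `r = r' k` with `k ∈ k₁(U)`, so
`(r, s) = (r', s) (k, 1) ∈ U`.
-/

section Factorization

variable [Group R] [Group S] {E : Type*} [Group E] {U : Subgroup (R × S)}

lemma mul_mem_of_mem_k1 {r k : R} {s : S} (h : (r, s) ∈ U) (hk : k ∈ k1 U) :
    (r * k, s) ∈ U := by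
  simpa using mul_mem h hk

def leftFactor (q : p1 U →* E) : Subgroup (R × E) :=
  ((p1 U).subtype.prod q).range

def rightFactor (q : p1 U →* E) : Subgroup (E × S) :=
  ((q.comp ((MonoidHom.fst R S).subgroupMap U)).prod ((MonoidHom.snd R S).comp U.subtype)).range

lemma mem_leftFactor {q : p1 U →* E} {r : R} {e : E} :
    (r, e) ∈ leftFactor q ↔ ∃ hr : r ∈ p1 U, q ⟨r, hr⟩ = e := by
  constructor
  · rintro ⟨⟨r', hr'⟩, h⟩
    obtain ⟨rfl, rfl⟩ := Prod.mk.inj h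
    exact ⟨hr', rfl⟩
  · rintro ⟨hr, rfl⟩
    exact ⟨⟨r, hr⟩, rfl⟩

lemma mem_rightFactor {q : p1 U →* E} {e : E} {s : S} :
    (e, s) ∈ rightFactor q ↔ ∃ r, ∃ h : (r, s) ∈ U, q ⟨r, _, h, rfl⟩ = e := by
  constructor
  · rintro ⟨⟨⟨r, s'⟩, h⟩, he⟩
    obtain ⟨rfl, rfl⟩ := Prod.mk.inj he
    exact ⟨r, h, rfl⟩
  · rintro ⟨r, h, rfl⟩
    exact ⟨⟨(r, s), h⟩, rfl⟩

theorem eq_starProd_leftFactor_rightFactor (q : p1 U →* E)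
    (hq : q.ker ≤ (k1 U).subgroupOf (p1 U)) : U = starProd (leftFactor q) (rightFactor q) := by
  ext ⟨r, s⟩
  simp only [mem_starProd, mem_leftFactor, mem_rightFactor]
  constructor
  · intro h
    exact ⟨_, ⟨⟨_, h, rfl⟩, rfl⟩, r, h, rfl⟩
  · rintro ⟨_, ⟨hr, rfl⟩, r', h', hq'⟩
    have hker : (⟨r', _, h', rfl⟩ : p1 U)⁻¹ * ⟨r, hr⟩ ∈ q.ker := by
      rw [MonoidHom.mem_ker, map_mul, map_inv, hq', inv_mul_cancel]
    simpa using mul_mem_of_mem_k1 h' (hq hker)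

end Factorization

/-- Every subgroup `U ≤ R × S` factorizes through its thorax `E = p₁(U)/k₁(U)`:
there are `X ≤ R × E` and `Y ≤ E × S` with `U = X * Y`. -/
theorem factorize_through_thorax (R S : Type*) [Group R] [Group S] (U : Subgroup (R × S)) :
    ∃ (X : Subgroup (R × (p1 U ⧸ (k1 U).subgroupOf (p1 U))))
      (Y : Subgroup ((p1 U ⧸ (k1 U).subgroupOf (p1 U)) × S)),
      U = starProd X Y :=
  ⟨_, _, eq_starProd_leftFactor_rightFactor (QuotientGroup.mk' _) (QuotientGroup.ker_mk' _).le⟩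

end SubgroupCat
end

section
/- Let R be a finite group. For an automorphism θ of R, let Δ(θ) = {(θ(r), r) : r ∈ R}, a subgroup of R × R, and write Δ(R) = Δ(id). Then: (i) Δ(θ ∘ φ) = Δ(θ) * Δ(φ) for all automorphisms θ, φ of R; (ii) the map θ ↦ Δ(θ) is injective; (iii) a subgroup U of R × R satisfies U * V = Δ(R) = V * U for some subgroup V of R × R if and only if U = Δ(θ) for some automorphism θ of R. In particular, θ ↦ Δ(θ) is a group isomorphism from Aut(R) onto the group of invertible elements of the monoid of subgroups of R × R under the star product with identity Δ(R). -/
/-! If `U * V = Δ(R)` and `V * U = Δ(S)`, then reading `(r, r)` and `(1, 1)` in `U * V` shows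
that `U` projects onto `R` and meets `R × 1` trivially; `V * U` gives the same for the other
factor. Thus both projections of `U` are bijective, and by Goursat's lemma `U` is the graph of an
isomorphism. -/

open scoped Classical

namespace SubgroupCat

variable {R S T : Type*}

/-- The subgroup `{(f x, x) : x ∈ L}` of `E × L`, the graph of `f : L →* E`. -/
def graphL {E L : Type*} [Group E] [Group L] (f : L →* E) : Subgroup (E × L) :=
  (f.prod (MonoidHom.id L)).range

/-- The subgroup `{(x, f x) : x ∈ L}` of `L × E`, the graph of `f : L →* E`. -/
def graphR {E L : Type*} [Group E] [Group L] (f : L →* E) : Subgroup (L × E) :=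
  ((MonoidHom.id L).prod f).range

/-- The diagonal subgroup `Δ(E) = {(e, e)} ≤ E × E`. -/
def diagSubgroup (E : Type*) [Group E] : Subgroup (E × E) :=
  graphL (MonoidHom.id E)

/-- The graph `Δ(θ) = {(θ r, r) : r ∈ R}` of an automorphism `θ` of `R`. -/
def deltaAut {R : Type*} [Group R] (θ : MulAut R) : Subgroup (R × R) :=
  graphL θ.toMonoidHom

@[simp] lemma mem_deltaAut {R : Type*} [Group R] {θ : MulAut R} {p : R × R} :
    p ∈ deltaAut θ ↔ ∃ x : R, θ x = p.1 ∧ x = p.2 := by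
  constructor
  · rintro ⟨x, hx⟩
    exact ⟨x, congrArg Prod.fst hx, congrArg Prod.snd hx⟩
  · rintro ⟨x, h1, h2⟩
    exact ⟨x, Prod.ext h1 h2⟩

@[simp] lemma mem_diagSubgroup {R : Type*} [Group R] {p : R × R} :
    p ∈ diagSubgroup R ↔ p.1 = p.2 := by
  constructor
  · rintro ⟨x, hx⟩
    rw [← hx]
    rfl
  · rintro h
    exact ⟨p.2, Prod.ext h.symm rfl⟩

/-- The monoid of subgroups of `R × R` under the star product, with identity
`Δ(R)`. -/
def starMonoid (R : Type*) [Group R] : Monoid (Subgroup (R × R)) where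
  mul := starProd
  one := diagSubgroup R
  mul_assoc U V W := by
    show starProd (starProd U V) W = starProd U (starProd V W)
    ext p
    simp only [mem_starProd]
    constructor
    · rintro ⟨s, ⟨t, hU, hV⟩, hW⟩
      exact ⟨t, hU, s, hV, hW⟩
    · rintro ⟨t, hU, s, hV, hW⟩
      exact ⟨s, ⟨t, hU, hV⟩, hW⟩
  one_mul U := by
    show starProd (diagSubgroup R) U = U
    ext p
    simp only [mem_starProd, mem_diagSubgroup]
    constructor
    · rintro ⟨s, h1, h2⟩
      cases h1
      exact h2
    · intro h
      exact ⟨p.1, rfl, h⟩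
  mul_one U := by
    show starProd U (diagSubgroup R) = U
    ext p
    simp only [mem_starProd, mem_diagSubgroup]
    constructor
    · rintro ⟨s, h1, h2⟩
      cases h2
      exact h1
    · intro h
      exact ⟨p.2, h, rfl⟩

section StarProdEqDiag

variable {R S : Type*} [Group R] [Group S] {U : Subgroup (R × S)} {V : Subgroup (S × R)}

lemma exists_mk_mem_left (h : starProd U V = diagSubgroup R) (r : R) : ∃ s, (r, s) ∈ U := by
  obtain ⟨s, hs, -⟩ : (r, r) ∈ starProd U V := h ▸ mem_diagSubgroup.2 rfl
  exact ⟨s, hs⟩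

lemma exists_mk_mem_right (h : starProd U V = diagSubgroup R) (r : R) : ∃ s, (s, r) ∈ V := by
  obtain ⟨s, -, hs⟩ : (r, r) ∈ starProd U V := h ▸ mem_diagSubgroup.2 rfl
  exact ⟨s, hs⟩

lemma eq_one_of_mk_one_mem_left (h : starProd U V = diagSubgroup R) {r : R} (hr : (r, 1) ∈ U) :
    r = 1 := by
  obtain ⟨s, hU, hV⟩ : ((1 : R), (1 : R)) ∈ starProd U V := h ▸ one_mem _
  have hrs : (r, s) ∈ U := by simpa using mul_mem hr hU
  exact mem_diagSubgroup.1 (h ▸ show (r, (1 : R)) ∈ starProd U V from ⟨s, hrs, hV⟩)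

lemma eq_one_of_one_mk_mem_right (h : starProd U V = diagSubgroup R) {r : R} (hr : (1, r) ∈ V) :
    r = 1 := by
  obtain ⟨s, hU, hV⟩ : ((1 : R), (1 : R)) ∈ starProd U V := h ▸ one_mem _
  have hsr : (s, r) ∈ V := by simpa using mul_mem hV hr
  exact (mem_diagSubgroup.1 (h ▸ show ((1 : R), r) ∈ starProd U V from ⟨s, hU, hsr⟩)).symm

lemma bijective_fst_of_starProd_eq (hUV : starProd U V = diagSubgroup R)
    (hVU : starProd V U = diagSubgroup S) : Function.Bijective (Prod.fst ∘ U.subtype) := by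
  refine ⟨(injective_iff_map_eq_one ((MonoidHom.fst R S).comp U.subtype)).2 ?_, ?_⟩
  · rintro ⟨⟨r, s⟩, hrs⟩ (rfl : r = 1)
    exact Subtype.ext (Prod.ext rfl (eq_one_of_one_mk_mem_right hVU hrs))
  · intro r
    obtain ⟨s, hrs⟩ := exists_mk_mem_left hUV r
    exact ⟨⟨(r, s), hrs⟩, rfl⟩

lemma bijective_snd_of_starProd_eq (hUV : starProd U V = diagSubgroup R)
    (hVU : starProd V U = diagSubgroup S) : Function.Bijective (Prod.snd ∘ U.subtype) := by
  refine ⟨(injective_iff_map_eq_one ((MonoidHom.snd R S).comp U.subtype)).2 ?_, ?_⟩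
  · rintro ⟨⟨r, s⟩, hrs⟩ (rfl : s = 1)
    exact Subtype.ext (Prod.ext (eq_one_of_mk_one_mem_left hUV hrs) rfl)
  · intro s
    obtain ⟨r, hrs⟩ := exists_mk_mem_right hVU s
    exact ⟨⟨(r, s), hrs⟩, rfl⟩

lemma exists_mulEquiv_eq_graph_of_starProd_eq (hUV : starProd U V = diagSubgroup R)
    (hVU : starProd V U = diagSubgroup S) : ∃ e : R ≃* S, U = e.toMonoidHom.graph :=
  Subgroup.exists_mulEquiv_eq_graph (bijective_fst_of_starProd_eq hUV hVU)
    (bijective_snd_of_starProd_eq hUV hVU)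

end StarProdEqDiag

section DeltaAut

variable {R : Type*} [Group R]

lemma deltaAut_mul (θ φ : MulAut R) :
    deltaAut (θ * φ) = starProd (deltaAut θ) (deltaAut φ) := by
  ext p
  simp only [mem_starProd, mem_deltaAut, MulAut.mul_apply]
  constructor
  · rintro ⟨x, h1, h2⟩
    exact ⟨φ x, ⟨φ x, h1, rfl⟩, ⟨x, rfl, h2⟩⟩
  · rintro ⟨s, ⟨x, hx, rfl⟩, ⟨y, rfl, hy⟩⟩
    exact ⟨y, hx, hy⟩

lemma deltaAut_one : deltaAut (1 : MulAut R) = diagSubgroup R := rfl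

lemma deltaAut_injective : Function.Injective (deltaAut : MulAut R → Subgroup (R × R)) := by
  intro θ φ h
  ext x
  obtain ⟨y, hy, rfl⟩ := mem_deltaAut.1 (h ▸ mem_deltaAut.2 ⟨x, rfl, rfl⟩ : (θ x, x) ∈ deltaAut φ)
  exact hy.symm

lemma graph_eq_deltaAut_inv (e : MulAut R) : e.toMonoidHom.graph = deltaAut e⁻¹ := by
  ext ⟨a, b⟩
  rw [MonoidHom.mem_graph, mem_deltaAut]
  constructor
  · rintro (rfl : e a = b)
    exact ⟨e a, e.symm_apply_apply a, rfl⟩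
  · rintro ⟨x, rfl, rfl⟩
    exact e.apply_symm_apply x

lemma exists_eq_deltaAut_of_starProd_eq {U V : Subgroup (R × R)}
    (hUV : starProd U V = diagSubgroup R) (hVU : starProd V U = diagSubgroup R) :
    ∃ θ : MulAut R, U = deltaAut θ := by
  obtain ⟨e, rfl⟩ := exists_mulEquiv_eq_graph_of_starProd_eq hUV hVU
  exact ⟨e⁻¹, graph_eq_deltaAut_inv e⟩

lemma starProd_deltaAut_inv (θ : MulAut R) :
    starProd (deltaAut θ) (deltaAut θ⁻¹) = diagSubgroup R := by
  rw [← deltaAut_mul, mul_inv_cancel, deltaAut_one]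

lemma starProd_inv_deltaAut (θ : MulAut R) :
    starProd (deltaAut θ⁻¹) (deltaAut θ) = diagSubgroup R := by
  rw [← deltaAut_mul, inv_mul_cancel, deltaAut_one]

end DeltaAut

section StarMonoid

attribute [local instance] starMonoid

variable {R : Type*} [Group R]

def deltaAutHom : MulAut R →* Subgroup (R × R) where
  toFun := deltaAut
  map_one' := deltaAut_one
  map_mul' := deltaAut_mul

lemma bijective_toHomUnits_deltaAutHom :
    Function.Bijective (deltaAutHom (R := R)).toHomUnits := by
  refine ⟨fun θ φ h => deltaAut_injective (congrArg Units.val h), fun u => ?_⟩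
  obtain ⟨θ, hθ⟩ := exists_eq_deltaAut_of_starProd_eq u.mul_inv u.inv_mul
  exact ⟨θ, Units.ext hθ.symm⟩

end StarMonoid

theorem deltaAut_monoid_iso_general (R : Type*) [Group R] :
    (∀ θ φ : MulAut R, deltaAut (θ * φ) = starProd (deltaAut θ) (deltaAut φ)) ∧
    Function.Injective (deltaAut : MulAut R → Subgroup (R × R)) ∧
    (∀ U : Subgroup (R × R),
      (∃ V : Subgroup (R × R),
          starProd U V = diagSubgroup R ∧ starProd V U = diagSubgroup R) ↔
        ∃ θ : MulAut R, U = deltaAut θ) ∧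
    (letI : Monoid (Subgroup (R × R)) := starMonoid R
     ∃ e : MulAut R ≃* (Subgroup (R × R))ˣ,
       ∀ θ : MulAut R, ((e θ : (Subgroup (R × R))ˣ) : Subgroup (R × R)) = deltaAut θ) := by
  refine ⟨deltaAut_mul, deltaAut_injective, fun U => ⟨?_, ?_⟩,
    ⟨MulEquiv.ofBijective _ bijective_toHomUnits_deltaAutHom, fun θ => rfl⟩⟩
  · rintro ⟨V, hUV, hVU⟩
    exact exists_eq_deltaAut_of_starProd_eq hUV hVU
  · rintro ⟨θ, rfl⟩
    exact ⟨deltaAut θ⁻¹, starProd_deltaAut_inv θ, starProd_inv_deltaAut θ⟩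

/-- For a finite group `R`: (i) `Δ(θ ∘ φ) = Δ(θ) * Δ(φ)`; (ii) `θ ↦ Δ(θ)` is injective;
(iii) `U ≤ R × R` is invertible for the star product iff `U = Δ(θ)` for some `θ ∈ Aut(R)`;
in particular `θ ↦ Δ(θ)` is a group isomorphism from `Aut(R)` onto the group of
invertible elements of the monoid of subgroups of `R × R` under the star product. -/
theorem deltaAut_monoid_iso (R : Type*) [Group R] [Finite R] :
    (∀ θ φ : MulAut R, deltaAut (θ * φ) = starProd (deltaAut θ) (deltaAut φ)) ∧
    Function.Injective (deltaAut : MulAut R → Subgroup (R × R)) ∧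
    (∀ U : Subgroup (R × R),
      (∃ V : Subgroup (R × R),
          starProd U V = diagSubgroup R ∧ starProd V U = diagSubgroup R) ↔
        ∃ θ : MulAut R, U = deltaAut θ) ∧
    (letI : Monoid (Subgroup (R × R)) := starMonoid R
     ∃ e : MulAut R ≃* (Subgroup (R × R))ˣ,
       ∀ θ : MulAut R, ((e θ : (Subgroup (R × R))ˣ) : Subgroup (R × R)) = deltaAut θ) :=
  deltaAut_monoid_iso_general R

end SubgroupCat
end

section
/- Let 𝕂 be a field of characteristic zero and let ℓ be a homomorphism of monoids from the positive integers under multiplication to the unit group 𝕂ˣ; for a finite group A write ℓ(A) = ℓ(|A|). For finite groups and subgroups U ≤ F × G, V ≤ G × H define σ(U, V) = ℓ(k₂(U) ∩ k₁(V)). Then for all finite groups F, G, H, I and all subgroups U ≤ F × G, V ≤ G × H, W ≤ H × I, one has σ(U, V * W) · σ(V, W) = σ(U, V) · σ(U * V, W); that is, σ is a cocycle for the subgroup category on finite groups. -/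
open scoped Classical

namespace SubgroupCat

variable {R S T : Type*}

/-- `ℓ(A) = ℓ(|A|)` for a finite group `A`, where `ℓ : ℕ⁺ →* 𝕂ˣ`. -/
noncomputable def ellG {𝕂 : Type*} [Field 𝕂] (ℓ : ℕ+ →* 𝕂ˣ) (A : Type*) [Group A] [Finite A] :
    𝕂 :=
  (ℓ ⟨Nat.card A, Nat.card_pos⟩ : 𝕂ˣ)

/-- The cocycle `σ(U, V) = ℓ(k₂(U) ∩ k₁(V))`. -/
noncomputable def sigmaC {𝕂 : Type*} [Field 𝕂] (ℓ : ℕ+ →* 𝕂ˣ)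
    {F G H : Type*} [Group F] [Group G] [Group H] [Finite G]
    (U : Subgroup (F × G)) (V : Subgroup (G × H)) : 𝕂 :=
  ellG ℓ ↑(k2 U ⊓ k1 V)

section Kernels

variable [Group R] [Group S] [Group T]

theorem card_inf_ker_mul_card_map {N : Type*} [Group N] (f : R →* N) (K : Subgroup R) :
    Nat.card ↥(f.ker ⊓ K) * Nat.card (K.map f) = Nat.card K := by
  simpa [Subgroup.relIndex_bot_left, Subgroup.relIndex_ker] using
    Subgroup.relIndex_inf_mul_relIndex (⊥ : Subgroup R) f.ker K

theorem range_inr_eq_ker_fst : (MonoidHom.inr R S).range = (MonoidHom.fst R S).ker := by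
  ext ⟨r, s⟩
  simp [Subgroup.mem_prod, eq_comm]

theorem range_inl_eq_ker_snd : (MonoidHom.inl R S).range = (MonoidHom.snd R S).ker := by
  ext ⟨r, s⟩
  simp [Subgroup.mem_prod, eq_comm]

theorem card_k2_mul_card_map_fst (X : Subgroup (R × S)) :
    Nat.card (k2 X) * Nat.card (X.map (MonoidHom.fst R S)) = Nat.card X := by
  rw [← card_inf_ker_mul_card_map (MonoidHom.fst R S) X, ← range_inr_eq_ker_fst,
    ← Subgroup.map_comap_eq,
    Subgroup.card_map_of_injective (f := MonoidHom.inr R S) (Prod.mk_right_injective 1), k2]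

theorem card_k1_mul_card_map_snd (X : Subgroup (R × S)) :
    Nat.card (k1 X) * Nat.card (X.map (MonoidHom.snd R S)) = Nat.card X := by
  rw [← card_inf_ker_mul_card_map (MonoidHom.snd R S) X, ← range_inl_eq_ker_snd,
    ← Subgroup.map_comap_eq,
    Subgroup.card_map_of_injective (f := MonoidHom.inl R S) (Prod.mk_left_injective 1), k1]

theorem k1_inf_prod (V : Subgroup (R × S)) (A : Subgroup R) (B : Subgroup S) :
    k1 (V ⊓ A.prod B) = A ⊓ k1 V := by
  ext r
  simp [k1, Subgroup.mem_prod, and_comm]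

theorem k2_inf_prod (V : Subgroup (R × S)) (A : Subgroup R) (B : Subgroup S) :
    k2 (V ⊓ A.prod B) = k2 V ⊓ B := by
  ext s
  simp [k2, Subgroup.mem_prod]

theorem map_fst_inf_prod_k1 (V : Subgroup (R × S)) (A : Subgroup R) (W : Subgroup (S × T)) :
    (V ⊓ A.prod (k1 W)).map (MonoidHom.fst R S) = A ⊓ k1 (starProd V W) := by
  ext r
  constructor
  · rintro ⟨⟨r, s⟩, ⟨hV, hA, hW⟩, rfl⟩
    exact ⟨hA, s, hV, hW⟩
  · rintro ⟨hA, s, hV, hW⟩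
    exact ⟨(r, s), ⟨hV, hA, hW⟩, rfl⟩

theorem map_snd_inf_k2_prod {Q : Type*} [Group Q] (U : Subgroup (Q × R)) (V : Subgroup (R × S))
    (B : Subgroup S) :
    (V ⊓ (k2 U).prod B).map (MonoidHom.snd R S) = k2 (starProd U V) ⊓ B := by
  ext s
  constructor
  · rintro ⟨⟨r, s⟩, ⟨hV, hU, hB⟩, rfl⟩
    exact ⟨⟨r, hU, hV⟩, hB⟩
  · rintro ⟨⟨r, hU, hV⟩, hB⟩
    exact ⟨(r, s), ⟨hV, hU, hB⟩, rfl⟩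

end Kernels

theorem ellG_mul_ellG_eq {𝕂 : Type*} [Field 𝕂] (ℓ : ℕ+ →* 𝕂ˣ) (A B C D : Type*)
    [Group A] [Group B] [Group C] [Group D] [Finite A] [Finite B] [Finite C] [Finite D]
    (h : Nat.card A * Nat.card B = Nat.card C * Nat.card D) :
    ellG ℓ A * ellG ℓ B = ellG ℓ C * ellG ℓ D := by
  have hpos : (⟨Nat.card A, Nat.card_pos⟩ * ⟨Nat.card B, Nat.card_pos⟩ : ℕ+) =
      ⟨Nat.card C, Nat.card_pos⟩ * ⟨Nat.card D, Nat.card_pos⟩ := PNat.eq h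
  simp only [ellG, ← Units.val_mul]
  exact congrArg Units.val ((map_mul ℓ _ _).symm.trans ((congrArg ℓ hpos).trans (map_mul ℓ _ _)))

theorem sigma_cocycle_general {𝕂 : Type*} [Field 𝕂] (ℓ : ℕ+ →* 𝕂ˣ)
    (F G H I : Type*) [Group F] [Group G] [Group H] [Group I]
    [Finite G] [Finite H]
    (U : Subgroup (F × G)) (V : Subgroup (G × H)) (W : Subgroup (H × I)) :
    sigmaC ℓ U (starProd V W) * sigmaC ℓ V W = sigmaC ℓ U V * sigmaC ℓ (starProd U V) W := by
  -- `X = {(g, h) ∈ V | (1, g) ∈ U, (h, 1) ∈ W}`; both sides are `ℓ(|X|)`.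
  set X := V ⊓ (k2 U).prod (k1 W)
  have h₁ := card_k2_mul_card_map_fst X
  have h₂ := card_k1_mul_card_map_snd X
  rw [k2_inf_prod, map_fst_inf_prod_k1] at h₁
  rw [k1_inf_prod, map_snd_inf_k2_prod] at h₂
  apply ellG_mul_ellG_eq
  rw [mul_comm, h₁, ← h₂]

/-- `σ` is a cocycle for the subgroup category on finite groups:
`σ(U, V * W) · σ(V, W) = σ(U, V) · σ(U * V, W)`. -/
theorem sigma_cocycle {𝕂 : Type*} [Field 𝕂] [CharZero 𝕂] (ℓ : ℕ+ →* 𝕂ˣ)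
    (F G H I : Type*) [Group F] [Group G] [Group H] [Group I]
    [Finite F] [Finite G] [Finite H] [Finite I]
    (U : Subgroup (F × G)) (V : Subgroup (G × H)) (W : Subgroup (H × I)) :
    sigmaC ℓ U (starProd V W) * sigmaC ℓ V W = sigmaC ℓ U V * sigmaC ℓ (starProd U V) W :=
  sigma_cocycle_general ℓ F G H I U V W

end SubgroupCat
end

section
/- Let P be a partially ordered set such that for every u ∈ P the set {v ∈ P : v ≤ u} is finite, and let A be an abelian group. Let ρ : P → P be a monotone map satisfying ρ(ρ(u)) = ρ(u) ≤ u for all u ∈ P (a downward retraction), and let σ : P → A be a function with σ(ρ(u)) = σ(u) for all u ∈ P. Suppose τ : P → A satisfies σ(u) = Σ_{v ≤ u} τ(v) for all u ∈ P, and suppose τ' : P → A satisfies σ(u) = Σ_{v ≤ u, v ∈ ρ(P)} τ'(v) for all u in the image ρ(P). Then τ(v) = τ'(v) for every v ∈ ρ(P), and τ(v) = 0 for every v ∈ P not in ρ(P). -/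
/-!
Extend `τ'` by zero off `ρ(P)`. For `v ∈ ρ(P)` one has `v ≤ u ↔ v ≤ ρ u`, so the extended
function sums over `{v ≤ u}` to `σ (ρ u) = σ u`: it is a totient function of `σ` on all of `P`.
Finite principal ideals make `<` well founded, and by induction along it a function is determined
by its sums over principal ideals; hence `τ` is this extension by zero.
-/

open Set

theorem wellFoundedLT_of_finite_Iic {P : Type*} [PartialOrder P]
    (hfin : ∀ u : P, (Iic u).Finite) : WellFoundedLT P :=
  StrictMono.wellFoundedLT (f := fun u => (Iic u).ncard) fun _ u h =>
    ncard_lt_ncard (Iic_ssubset_Iic.mpr h) (hfin u)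

theorem eq_of_forall_finsum_mem_Iic_eq {P A : Type*} [PartialOrder P] [AddCommGroup A]
    (hfin : ∀ u : P, (Iic u).Finite) {f g : P → A}
    (h : ∀ u, ∑ᶠ v ∈ Iic u, f v = ∑ᶠ v ∈ Iic u, g v) : f = g := by
  have := wellFoundedLT_of_finite_Iic hfin
  funext u
  induction u using WellFoundedLT.induction with
  | _ u ih =>
    have hIio : (Iio u).Finite := (hfin u).subset Iio_subset_Iic_self
    have hu := h u
    rw [← Iio_insert, finsum_mem_insert _ (self_notMem_Iio (a := u)) hIio,
      finsum_mem_insert _ (self_notMem_Iio (a := u)) hIio, finsum_mem_congr (t := Iio u) rfl ih] at hu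
    exact add_right_cancel hu

theorem finsum_mem_indicator {α M : Type*} [AddCommMonoid M] (s t : Set α) (f : α → M) :
    ∑ᶠ v ∈ s, t.indicator f v = ∑ᶠ v ∈ s ∩ t, f v := by
  rw [finsum_mem_def, finsum_mem_def, indicator_indicator]

theorem le_apply_iff_le_of_mem_range {P : Type*} [Preorder P] {ρ : P → P} (hmono : Monotone ρ)
    (hidem : ∀ u, ρ (ρ u) = ρ u) (hdown : ∀ u, ρ u ≤ u) {u v : P} (hv : v ∈ range ρ) :
    v ≤ ρ u ↔ v ≤ u := by
  obtain ⟨w, rfl⟩ := hv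
  exact ⟨fun h => h.trans (hdown u), fun h => hidem w ▸ hmono h⟩

/-- **Boltje–Danz.** Let `P` be a poset all of whose principal order ideals are finite,
`A` an abelian group, `ρ` a downward retraction of `P`, and `σ : P → A` a function with
`σ ∘ ρ = σ`.  If `τ` is the totient function of `σ` on `P` and `τ'` is the totient function
of the restriction of `σ` to the image `ρ(P)`, then `τ` agrees with `τ'` on `ρ(P)` and
vanishes off `ρ(P)`. -/
theorem retraction_totient {P : Type*} [PartialOrder P]
    (hfin : ∀ u : P, {v : P | v ≤ u}.Finite)
    {A : Type*} [AddCommGroup A] (ρ : P → P) (hmono : Monotone ρ)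
    (hidem : ∀ u, ρ (ρ u) = ρ u) (hdown : ∀ u, ρ u ≤ u)
    (σ : P → A) (hσ : ∀ u, σ (ρ u) = σ u)
    (τ : P → A) (hτ : ∀ u, σ u = ∑ᶠ v ∈ {v : P | v ≤ u}, τ v)
    (τ' : P → A)
    (hτ' : ∀ u ∈ Set.range ρ, σ u = ∑ᶠ v ∈ {v : P | v ≤ u ∧ v ∈ Set.range ρ}, τ' v) :
    (∀ v ∈ Set.range ρ, τ v = τ' v) ∧ (∀ v ∉ Set.range ρ, τ v = 0) := by
  have hext : τ = (range ρ).indicator τ' := by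
    refine eq_of_forall_finsum_mem_Iic_eq hfin fun u => ?_
    have hideal : {v | v ≤ ρ u ∧ v ∈ range ρ} = Iic u ∩ range ρ := by
      ext v
      exact and_congr_left (le_apply_iff_le_of_mem_range hmono hidem hdown)
    calc ∑ᶠ v ∈ Iic u, τ v = σ (ρ u) := (hτ u).symm.trans (hσ u).symm
      _ = ∑ᶠ v ∈ Iic u ∩ range ρ, τ' v := hideal ▸ hτ' (ρ u) (mem_range_self u)
      _ = ∑ᶠ v ∈ Iic u, (range ρ).indicator τ' v := (finsum_mem_indicator _ _ _).symm
  subst hext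
  exact ⟨fun v hv => indicator_of_mem hv τ', fun v hv => indicator_of_notMem hv τ'⟩
end

section
/- Let F, G, H be finite groups and let U ≤ F × G and V ≤ G × H be subgroups. Then |U| · |V| = |p₂(U) · p₁(V)| · |k₂(U) ∩ k₁(V)| · |U * V|, where p₂(U) · p₁(V) denotes the product set {x·y : x ∈ p₂(U), y ∈ p₁(V)} in G and |·| denotes cardinality. -/
open scoped Classical

namespace SubgroupCat

variable {R S T : Type*}

/-!
Count the fibre product `X = {(u, v) ∈ U × V | u.2 = v.1}` in two ways. The group `U × V` acts
on `S` by `(u, v) • x = u.2 * x * v.1⁻¹`; the orbit of `1` is `p₂(U) * p₁(V)` and the stabilizer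
of `1` is `X`, so `|U| * |V| = |p₂(U) * p₁(V)| * |X|`. The homomorphism `(u, v) ↦ (u.1, v.2)`
maps `X` onto `U * V`, and its kernel consists of the pairs `((1, s), (s, 1))` with
`s ∈ k₂(U) ∩ k₁(V)`, so `|X| = |U * V| * |k₂(U) ∩ k₁(V)|`.
-/

section FiberProd

variable {A B G : Type*} [Group A] [Group B] [Group G] (f : A →* G) (g : B →* G)

def fiberProd : Subgroup (A × B) :=
  (f.comp (MonoidHom.fst A B)).eqLocus (g.comp (MonoidHom.snd A B))

lemma mem_fiberProd {p : A × B} : p ∈ fiberProd f g ↔ f p.1 = g p.2 := Iff.rfl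

abbrev twoSidedAction : MulAction (A × B) G where
  smul p x := f p.1 * x * (g p.2)⁻¹
  one_smul x := by simp [HSMul.hSMul]
  mul_smul p q x := by simp [HSMul.hSMul, mul_assoc]

open scoped Pointwise in
theorem card_mul_card_eq_card_mul_card_fiberProd :
    Nat.card A * Nat.card B =
      Nat.card ↥((f.range : Set G) * g.range) * Nat.card (fiberProd f g) := by
  let := twoSidedAction f g
  have smul_one (p : A × B) : p • (1 : G) = f p.1 * (g p.2)⁻¹ := mul_one (f p.1) ▸ rfl
  have orbit_one : MulAction.orbit (A × B) (1 : G) = (f.range : Set G) * g.range := by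
    ext x
    simp only [MulAction.mem_orbit_iff, smul_one, Prod.exists, Set.mem_mul, SetLike.mem_coe,
      MonoidHom.mem_range, exists_exists_eq_and]
    constructor
    · rintro ⟨a, b, rfl⟩
      exact ⟨a, b⁻¹, by rw [map_inv]⟩
    · rintro ⟨a, b, rfl⟩
      exact ⟨a, b⁻¹, by rw [map_inv, inv_inv]⟩
  have stabilizer_one : MulAction.stabilizer (A × B) (1 : G) = fiberProd f g := by
    ext p
    rw [MulAction.mem_stabilizer_iff, smul_one, mul_inv_eq_one, mem_fiberProd]
  rw [← Nat.card_prod, ← (fiberProd f g).card_mul_index, ← stabilizer_one,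
    MulAction.index_stabilizer, orbit_one, Nat.card_coe_set_eq, mul_comm]

end FiberProd

section StarProd

variable [Group R] [Group S] [Group T] (U : Subgroup (R × S)) (V : Subgroup (S × T))

def matchingPairs : Subgroup (U × V) :=
  fiberProd ((MonoidHom.snd R S).comp U.subtype) ((MonoidHom.fst S T).comp V.subtype)

def outerHom : matchingPairs U V →* R × T where
  toFun x := ((x.1.1 : R × S).1, (x.1.2 : S × T).2)
  map_one' := rfl
  map_mul' _ _ := rfl

def diagonalHom : ↥(k2 U ⊓ k1 V) →* matchingPairs U V where
  toFun s := ⟨(⟨(1, s), s.2.1⟩, ⟨(s, 1), s.2.2⟩), rfl⟩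
  map_one' := rfl
  map_mul' _ _ := by ext <;> simp

lemma range_outerHom : (outerHom U V).range = starProd U V := by
  ext p
  constructor
  · rintro ⟨⟨⟨⟨⟨r, s⟩, hu⟩, ⟨⟨s', t⟩, hv⟩⟩, hs : s = s'⟩, rfl⟩
    subst hs
    exact ⟨s, hu, hv⟩
  · rintro ⟨s, hu, hv⟩
    exact ⟨⟨(⟨(p.1, s), hu⟩, ⟨(s, p.2), hv⟩), rfl⟩, rfl⟩

lemma diagonalHom_injective : Function.Injective (diagonalHom U V) := fun _ _ h =>
  Subtype.ext (congrArg (fun x : matchingPairs U V => (x.1.1 : R × S).2) h)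

lemma range_diagonalHom : (diagonalHom U V).range = (outerHom U V).ker := by
  ext x
  constructor
  · rintro ⟨s, rfl⟩
    rfl
  · obtain ⟨⟨⟨⟨r, s⟩, hu⟩, ⟨⟨s', t⟩, hv⟩⟩, hs : s = s'⟩ := x
    subst hs
    intro hx
    obtain ⟨rfl, rfl⟩ : r = 1 ∧ t = 1 := Prod.mk.inj hx
    exact ⟨⟨s, hu, hv⟩, rfl⟩

open scoped Pointwise in
lemma card_mul_card_eq_card_mul_card_matchingPairs :
    Nat.card U * Nat.card V =
      Nat.card ↥((p2 U : Set S) * (p1 V : Set S)) * Nat.card (matchingPairs U V) := by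
  rw [card_mul_card_eq_card_mul_card_fiberProd ((MonoidHom.snd R S).comp U.subtype)
    ((MonoidHom.fst S T).comp V.subtype), MonoidHom.range_comp, MonoidHom.range_comp,
    U.range_subtype, V.range_subtype]
  rfl

lemma card_matchingPairs :
    Nat.card (matchingPairs U V) = Nat.card (starProd U V) * Nat.card ↥(k2 U ⊓ k1 V) := by
  rw [← (outerHom U V).ker.card_mul_index, Subgroup.index_ker, range_outerHom, mul_comm,
    ← range_diagonalHom,
    ← Nat.card_congr (MonoidHom.ofInjective (diagonalHom_injective U V)).toEquiv]

end StarProd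

open scoped Pointwise in
theorem card_mul_card_general (F G H : Type*) [Group F] [Group G] [Group H]
    (U : Subgroup (F × G)) (V : Subgroup (G × H)) :
    Nat.card ↥U * Nat.card ↥V =
      Nat.card ↥((p2 U : Set G) * (p1 V : Set G)) * Nat.card ↥(k2 U ⊓ k1 V) *
        Nat.card ↥(starProd U V) := by
  rw [card_mul_card_eq_card_mul_card_matchingPairs, card_matchingPairs]
  ring

open scoped Pointwise in
/-- `|U| · |V| = |p₂(U) · p₁(V)| · |k₂(U) ∩ k₁(V)| · |U * V|`. -/
theorem card_mul_card (F G H : Type*) [Group F] [Group G] [Group H]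
    [Finite F] [Finite G] [Finite H]
    (U : Subgroup (F × G)) (V : Subgroup (G × H)) :
    Nat.card ↥U * Nat.card ↥V =
      Nat.card ↥((p2 U : Set G) * (p1 V : Set G)) * Nat.card ↥(k2 U ⊓ k1 V) *
        Nat.card ↥(starProd U V) :=
  card_mul_card_general F G H U V

end SubgroupCat
end
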